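/- Direct-sum inequality for the geometric Rényi relative entropy: for every α > 1 and classical–quantum operators κ = ∑_x p(x)|x⟩⟨x|⊗κ_x (a state) and λ = ∑_x q(x)|x⟩⟨x|⊗λ_x (positive semidefinite), one has D̂_α(κ‖λ) ≥ D(p‖q) + ∑_x p(x) D̂_α(κ_x‖λ_x). -/

import Mathlib

/-!
Both `κ` and `λ` are block diagonal and the functional calculus acts blockwise, so by homogeneity
the trace `Q̂_α(κ‖λ) = Tr[λ (λ^{-1/2} κ λ^{-1/2})^α]` splits as
`∑ₓ p(x)^α q(x)^{1-α} Q̂_α(κₓ‖λₓ) = ∑ₓ p(x) · (p(x)/q(x))^{α-1} Q̂_α(κₓ‖λₓ)`.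
Concavity of `log₂` (Jensen with the weights `p`) bounds `log₂` of this average from below by
`(α - 1) D(p‖q) + ∑ₓ p(x) log₂ Q̂_α(κₓ‖λₓ)`; divide by `α - 1 > 0`.
-/

open scoped Matrix Classical ComplexOrder

namespace RainsPaper

/-- Natural matrix logarithm of a Hermitian matrix via spectral decomposition
(with the convention `log 0 = 0` on the kernel); junk value `0` otherwise. -/
noncomputable def matLog {n : Type} [Fintype n] [DecidableEq n] (A : Matrix n n ℂ) :
    Matrix n n ℂ :=
  if hA : A.IsHermitian then
    (hA.eigenvectorUnitary : Matrix n n ℂ) *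
      (Matrix.diagonal fun i => (Real.log (hA.eigenvalues i) : ℂ)) *
      (star (hA.eigenvectorUnitary : Matrix n n ℂ))
  else 0

/-- Real power of a Hermitian matrix via spectral decomposition (with the convention
`0 ^ r = 0` for `r ≠ 0`, so negative powers are taken on the support);
junk value `0` otherwise. -/
noncomputable def matPow {n : Type} [Fintype n] [DecidableEq n] (A : Matrix n n ℂ) (r : ℝ) :
    Matrix n n ℂ :=
  if hA : A.IsHermitian then
    (hA.eigenvectorUnitary : Matrix n n ℂ) *
      (Matrix.diagonal fun i => ((hA.eigenvalues i ^ r : ℝ) : ℂ)) *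
      (star (hA.eigenvectorUnitary : Matrix n n ℂ))
  else 0

/-- A state is a positive semidefinite operator with unit trace. -/
def IsState {n : Type} [Fintype n] (ρ : Matrix n n ℂ) : Prop :=
  ρ.PosSemidef ∧ ρ.trace = 1

/-- `supp ω ⊆ supp τ`, expressed (for Hermitian matrices) as `ker τ ⊆ ker ω`. -/
def SuppSubset {n : Type} [Fintype n] (ω τ : Matrix n n ℂ) : Prop :=
  ∀ v : n → ℂ, τ.mulVec v = 0 → ω.mulVec v = 0

/-- Trace norm `‖X‖₁ = Tr √(X†X)`. -/
noncomputable def traceNorm {n : Type} [Fintype n] [DecidableEq n] (X : Matrix n n ℂ) : ℝ :=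
  ((matPow (Xᴴ * X) 2⁻¹).trace).re

/-- Fidelity `F(ω,τ) = ‖√ω √τ‖₁²`. -/
noncomputable def fidelity {n : Type} [Fintype n] [DecidableEq n] (ω τ : Matrix n n ℂ) : ℝ :=
  (traceNorm (matPow ω 2⁻¹ * matPow τ 2⁻¹)) ^ 2

/-- Extended base-2 logarithm: `elog2 x = log₂ x` for `x > 0` and `-∞` for `x ≤ 0`. -/
noncomputable def elog2 (x : ℝ) : EReal :=
  if x ≤ 0 then ⊥ else ((Real.logb 2 x : ℝ) : EReal)

/-- Quantum relative entropy `D(ω‖τ) = Tr[ω (log₂ ω - log₂ τ)]` if `supp ω ⊆ supp τ`,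
and `+∞` otherwise. -/
noncomputable def qRelEnt {n : Type} [Fintype n] [DecidableEq n] (ω τ : Matrix n n ℂ) : EReal :=
  if SuppSubset ω τ then
    ((((ω * (matLog ω - matLog τ)).trace).re / Real.log 2 : ℝ) : EReal)
  else ⊤

/-- Sandwiched Rényi relative entropy
`D̃_α(ω‖τ) = (α-1)⁻¹ log₂ Tr[(τ^{(1-α)/(2α)} ω τ^{(1-α)/(2α)})^α]` when `α ∈ (0,1)`, or
`α > 1` and `supp ω ⊆ supp τ`; `+∞` otherwise. -/
noncomputable def sandRenyi {n : Type} [Fintype n] [DecidableEq n] (α : ℝ)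
    (ω τ : Matrix n n ℂ) : EReal :=
  if (0 < α ∧ α < 1) ∨ (1 < α ∧ SuppSubset ω τ) then
    (((α - 1)⁻¹ : ℝ) : EReal) *
      elog2 (((matPow (matPow τ ((1 - α) / (2 * α)) * ω * matPow τ ((1 - α) / (2 * α))) α).trace).re)
  else ⊤

/-- Petz Rényi relative entropy `D_α(ω‖τ) = (α-1)⁻¹ log₂ Tr[ω^α τ^{1-α}]` when `α ∈ (0,1)`,
or `α > 1` and `supp ω ⊆ supp τ`; `+∞` otherwise. -/
noncomputable def petzRenyi {n : Type} [Fintype n] [DecidableEq n] (α : ℝ)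
    (ω τ : Matrix n n ℂ) : EReal :=
  if (0 < α ∧ α < 1) ∨ (1 < α ∧ SuppSubset ω τ) then
    (((α - 1)⁻¹ : ℝ) : EReal) * elog2 (((matPow ω α * matPow τ (1 - α)).trace).re)
  else ⊤

/-- Geometric Rényi relative entropy `D̂_α(ω‖τ) = (α-1)⁻¹ log₂ Tr[τ (τ^{-1/2} ω τ^{-1/2})^α]`
(inverses on the support) when `α ∈ (0,1)`, or `α > 1` and `supp ω ⊆ supp τ`; `+∞` otherwise. -/
noncomputable def geomRenyi {n : Type} [Fintype n] [DecidableEq n] (α : ℝ)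
    (ω τ : Matrix n n ℂ) : EReal :=
  if (0 < α ∧ α < 1) ∨ (1 < α ∧ SuppSubset ω τ) then
    (((α - 1)⁻¹ : ℝ) : EReal) *
      elog2 (((τ * matPow (matPow τ (-2⁻¹) * ω * matPow τ (-2⁻¹)) α).trace).re)
  else ⊤

/-- Classical relative entropy `D(p‖q)`, equal to `+∞` unless `supp p ⊆ supp q`
(terms with `p x = 0` contribute zero). -/
noncomputable def cRelEnt {X : Type} [Fintype X] (p q : X → ℝ) : EReal :=
  if ∀ x, p x ≠ 0 → q x ≠ 0 then
    ((∑ x, p x * Real.logb 2 (p x / q x) : ℝ) : EReal)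
  else ⊤

/-- `p` is a probability distribution on the finite set `X`. -/
def IsProb {X : Type} [Fintype X] (p : X → ℝ) : Prop :=
  (∀ x, 0 ≤ p x) ∧ ∑ x, p x = 1

/-- The classical–quantum operator `∑ x p(x) |x⟩⟨x| ⊗ K x`. -/
noncomputable def cqOp {X A : Type} [DecidableEq X] (p : X → ℝ)
    (K : X → Matrix A A ℂ) : Matrix (X × A) (X × A) ℂ :=
  Matrix.of fun a b => if a.1 = b.1 then (p a.1 : ℂ) * K a.1 a.2 b.2 else 0

/-- Partial transpose (on the second tensor factor):
`(id ⊗ T)(X)_{(i,k),(j,l)} = X_{(i,l),(j,k)}`. -/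
def ptrans {a b : Type} (X : Matrix (a × b) (a × b) ℂ) : Matrix (a × b) (a × b) ℂ :=
  Matrix.of fun p q => X (p.1, q.2) (q.1, p.2)

/-- The partial transpose as a linear map. -/
def ptransL {a b : Type} : Matrix (a × b) (a × b) ℂ →ₗ[ℂ] Matrix (a × b) (a × b) ℂ where
  toFun := ptrans
  map_add' _ _ := rfl
  map_smul' _ _ := rfl

/-- `PPT'` : positive semidefinite bipartite operators whose partial transpose has
trace norm at most 1. -/
def PPTprime {a b : Type} [Fintype a] [Fintype b] [DecidableEq a] [DecidableEq b]
    (σ : Matrix (a × b) (a × b) ℂ) : Prop :=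
  σ.PosSemidef ∧ traceNorm (ptrans σ) ≤ 1

/-- The Rains relative entropy `R(ρ) = inf_{σ ∈ PPT'} D(ρ‖σ)`. -/
noncomputable def Rains {a b : Type} [Fintype a] [Fintype b] [DecidableEq a] [DecidableEq b]
    (ρ : Matrix (a × b) (a × b) ℂ) : EReal :=
  ⨅ σ : {σ : Matrix (a × b) (a × b) ℂ // PPTprime σ}, qRelEnt ρ σ.1

/-- The sandwiched Rényi Rains relative entropy `R̃_α(ρ) = inf_{σ ∈ PPT'} D̃_α(ρ‖σ)`. -/
noncomputable def sandRains {a b : Type} [Fintype a] [Fintype b] [DecidableEq a] [DecidableEq b]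
    (α : ℝ) (ρ : Matrix (a × b) (a × b) ℂ) : EReal :=
  ⨅ σ : {σ : Matrix (a × b) (a × b) ℂ // PPTprime σ}, sandRenyi α ρ σ.1

/-- The extension `id_{Fin k} ⊗ Φ` of a linear map on matrices. -/
def matExt {n m : Type} [Fintype n] [Fintype m]
    (Φ : Matrix n n ℂ →ₗ[ℂ] Matrix m m ℂ) (k : ℕ)
    (X : Matrix (Fin k × n) (Fin k × n) ℂ) : Matrix (Fin k × m) (Fin k × m) ℂ :=
  Matrix.of fun p q => Φ (Matrix.of fun i j => X (p.1, i) (q.1, j)) p.2 q.2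

/-- Complete positivity: all extensions `id_k ⊗ Φ` preserve positive semidefiniteness. -/
def IsCP {n m : Type} [Fintype n] [Fintype m]
    (Φ : Matrix n n ℂ →ₗ[ℂ] Matrix m m ℂ) : Prop :=
  ∀ (k : ℕ) (X : Matrix (Fin k × n) (Fin k × n) ℂ), X.PosSemidef → (matExt Φ k X).PosSemidef

/-- Trace preservation. -/
def IsTP {n m : Type} [Fintype n] [Fintype m]
    (Φ : Matrix n n ℂ →ₗ[ℂ] Matrix m m ℂ) : Prop :=
  ∀ X : Matrix n n ℂ, (Φ X).trace = X.trace

/-- A selective PPT operation: a family of completely positive maps `P x` such that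
`(id ⊗ T) ∘ P x ∘ (id ⊗ T)` is completely positive for every `x` and `∑ x, P x` is
trace preserving. -/
def IsSelectivePPT {a b a' b' X : Type} [Fintype a] [Fintype b] [Fintype a'] [Fintype b']
    [Fintype X]
    (P : X → (Matrix (a × b) (a × b) ℂ →ₗ[ℂ] Matrix (a' × b') (a' × b') ℂ)) : Prop :=
  (∀ x, IsCP (P x)) ∧ (∀ x, IsCP (ptransL ∘ₗ P x ∘ₗ ptransL)) ∧
    (∀ ρ : Matrix (a × b) (a × b) ℂ, ∑ x, ((P x) ρ).trace = ρ.trace)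

/-- The maximally entangled state `Φ^d = |Φ^d⟩⟨Φ^d|`, `|Φ^d⟩ = d^{-1/2} ∑ i |i⟩|i⟩`. -/
noncomputable def maxEnt (d : ℕ) : Matrix (Fin d × Fin d) (Fin d × Fin d) ℂ :=
  Matrix.of fun p q => if p.1 = p.2 ∧ q.1 = q.2 then ((d : ℂ))⁻¹ else 0

/-- Binary entropy `h₂(ε) = -ε log₂ ε - (1-ε) log₂ (1-ε)`. -/
noncomputable def h2 (ε : ℝ) : ℝ :=
  -ε * Real.logb 2 ε - (1 - ε) * Real.logb 2 (1 - ε)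

section RealInequalities

-- Also at `d = 0`, where `0 ^ (-1/2) = 0`.
lemma rpow_mul_rpow_neg_half {c d α : ℝ} (hα : α ≠ 1) (hc : 0 ≤ c) (hd : 0 ≤ d) :
    d * (d ^ (-2⁻¹ : ℝ) * c * d ^ (-2⁻¹ : ℝ)) ^ α = c ^ α * d ^ (1 - α) := by
  rcases hd.eq_or_lt with rfl | hd
  · simp [Real.zero_rpow (sub_ne_zero.2 hα.symm)]
  have hdd : d ^ (-2⁻¹ : ℝ) * c * d ^ (-2⁻¹ : ℝ) = c * d ^ (-1 : ℝ) := by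
    rw [mul_right_comm, ← Real.rpow_add hd, mul_comm]
    norm_num
  rw [hdd, Real.mul_rpow hc (Real.rpow_nonneg hd.le _), ← Real.rpow_mul hd.le,
    mul_left_comm, ← Real.rpow_one_add' hd.le (by intro h; exact hα (by linarith))]
  ring_nf

lemma concaveOn_logb_Ioi {b : ℝ} (hb : 1 ≤ b) : ConcaveOn ℝ (Set.Ioi 0) (Real.logb b) := by
  have := strictConcaveOn_log_Ioi.concaveOn.smul (inv_nonneg.2 (Real.log_nonneg hb))
  exact this.congr fun x _ => by simp only [smul_eq_mul, ← div_eq_inv_mul, Real.logb]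

lemma sum_mul_logb_le_logb_sum_mul {ι : Type} (s : Finset ι) {b : ℝ} (hb : 1 ≤ b)
    {w z : ι → ℝ} (hw : ∀ i ∈ s, 0 ≤ w i) (hw1 : ∑ i ∈ s, w i = 1)
    (hz : ∀ i ∈ s, w i ≠ 0 → 0 < z i) :
    ∑ i ∈ s, w i * Real.logb b (z i) ≤ Real.logb b (∑ i ∈ s, w i * z i) := by
  classical
  have hsupp {f : ι → ℝ} (hf : ∀ i, w i = 0 → f i = 0) :
      ∑ i ∈ s with w i ≠ 0, f i = ∑ i ∈ s, f i :=
    Finset.sum_filter_of_ne fun i _ hi => fun h => hi (hf i h)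
  rw [← hsupp fun i h => by rw [h, zero_mul], ← hsupp fun i h => by rw [h, zero_mul]]
  refine (concaveOn_logb_Ioi hb).le_map_sum (fun i hi => hw i (Finset.mem_filter.1 hi).1)
    ((hsupp fun i h => h).trans hw1) fun i hi => ?_
  exact hz i (Finset.mem_filter.1 hi).1 (Finset.mem_filter.1 hi).2

lemma rpow_mul_rpow_one_sub {a b α : ℝ} (hα : α ≠ 0) (ha : 0 ≤ a) (hb : a ≠ 0 → 0 < b) :
    a ^ α * b ^ (1 - α) = a * ((a / b) ^ (α - 1)) := by
  rcases ha.eq_or_lt with rfl | ha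
  · simp [Real.zero_rpow hα]
  have hb := hb ha.ne'
  rw [Real.div_rpow ha.le hb.le, Real.rpow_sub_one ha.ne', Real.rpow_sub_one hb.ne',
    Real.rpow_sub hb, Real.rpow_one]
  field_simp

lemma sum_mul_logb_div_add_le_logb_sum_rpow {X : Type} [Fintype X] {α : ℝ} (hα : 1 < α)
    {p q T : X → ℝ} (hp : IsProb p) (hq : ∀ x, p x ≠ 0 → 0 < q x)
    (hT : ∀ x, p x ≠ 0 → 0 < T x) :
    ∑ x, p x * Real.logb 2 (p x / q x) + ∑ x, p x * ((α - 1)⁻¹ * Real.logb 2 (T x)) ≤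
      (α - 1)⁻¹ * Real.logb 2 (∑ x, p x ^ α * q x ^ (1 - α) * T x) := by
  have hα1 : 0 < α - 1 := sub_pos.2 hα
  have hratio {x : X} (hx : p x ≠ 0) : 0 < p x / q x := div_pos ((hp.1 x).lt_of_ne' hx) (hq x hx)
  have hterm (x : X) : p x ^ α * q x ^ (1 - α) * T x = p x * ((p x / q x) ^ (α - 1) * T x) := by
    rw [rpow_mul_rpow_one_sub (by linarith) (hp.1 x) (hq x), mul_assoc]
  have hlogb (x : X) : p x * ((α - 1)⁻¹ * Real.logb 2 ((p x / q x) ^ (α - 1) * T x)) =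
      p x * Real.logb 2 (p x / q x) + p x * ((α - 1)⁻¹ * Real.logb 2 (T x)) := by
    rcases eq_or_ne (p x) 0 with hx | hx
    · simp [hx]
    rw [Real.logb_mul (Real.rpow_pos_of_pos (hratio hx) _).ne' (hT x hx).ne',
      Real.logb_rpow_eq_mul_logb_of_pos (hratio hx)]
    field_simp
  have jensen := sum_mul_logb_le_logb_sum_mul Finset.univ one_le_two
    (z := fun x => (p x / q x) ^ (α - 1) * T x) (fun x _ => hp.1 x) hp.2
    fun x _ hx => mul_pos (Real.rpow_pos_of_pos (hratio hx) _) (hT x hx)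
  calc _ = (α - 1)⁻¹ * ∑ x, p x * Real.logb 2 ((p x / q x) ^ (α - 1) * T x) := by
        simp only [Finset.mul_sum, mul_left_comm (α - 1)⁻¹, hlogb, Finset.sum_add_distrib]
    _ ≤ _ := by
        simp only [hterm]
        exact mul_le_mul_of_nonneg_left jensen (inv_nonneg.2 hα1.le)

lemma sum_rpow_mul_rpow_one_sub_mul_pos {X : Type} [Fintype X] {α : ℝ} (hα : α ≠ 0)
    {p q T : X → ℝ} (hp : IsProb p) (hq : ∀ x, p x ≠ 0 → 0 < q x)
    (hT : ∀ x, p x ≠ 0 → 0 < T x) : 0 < ∑ x, p x ^ α * q x ^ (1 - α) * T x := by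
  have hpos {x : X} (hx : p x ≠ 0) : 0 < p x ^ α * q x ^ (1 - α) * T x :=
    mul_pos (mul_pos (Real.rpow_pos_of_pos ((hp.1 x).lt_of_ne' hx) _)
      (Real.rpow_pos_of_pos (hq x hx) _)) (hT x hx)
  obtain ⟨x, -, hx⟩ := Finset.exists_ne_zero_of_sum_ne_zero (hp.2.trans_ne one_ne_zero)
  refine Finset.sum_pos' (fun y _ => ?_) ⟨x, Finset.mem_univ x, hpos hx⟩
  rcases eq_or_ne (p y) 0 with hy | hy
  · simp [hy, Real.zero_rpow hα]
  · exact (hpos hy).le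

end RealInequalities

@[norm_cast]
lemma _root_.EReal.coe_finset_sum {ι : Type} (s : Finset ι) (f : ι → ℝ) :
    ((∑ i ∈ s, f i : ℝ) : EReal) = ∑ i ∈ s, (f i : EReal) :=
  map_sum (⟨⟨Real.toEReal, EReal.coe_zero⟩, EReal.coe_add⟩ : ℝ →+ EReal) f s

lemma elog2_of_pos {x : ℝ} (hx : 0 < x) : elog2 x = (Real.logb 2 x : EReal) :=
  if_neg hx.not_ge

lemma elog2_of_nonpos {x : ℝ} (hx : x ≤ 0) : elog2 x = ⊥ :=
  if_pos hx

open scoped MatrixOrder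

lemma isHermitian_ofReal_smul {n : Type} {A : Matrix n n ℂ} (hA : A.IsHermitian) (c : ℝ) :
    ((c : ℂ) • A).IsHermitian := by
  rw [Complex.coe_smul]
  exact (IsSelfAdjoint.all c).smul hA.isSelfAdjoint

section MatPow

variable {n : Type} [Fintype n] [DecidableEq n]

lemma matPow_eq_cfc {A : Matrix n n ℂ} (hA : A.IsHermitian) (r : ℝ) :
    matPow A r = cfc (· ^ r : ℝ → ℝ) A := by
  rw [matPow, dif_pos hA, hA.cfc_eq, Matrix.IsHermitian.cfc, Unitary.conjStarAlgAut_apply]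
  rfl

lemma matPow_smul {A : Matrix n n ℂ} (hA : A.PosSemidef) {c : ℝ} (hc : 0 ≤ c) (r : ℝ) :
    matPow ((c : ℂ) • A) r = ((c ^ r : ℝ) : ℂ) • matPow A r := by
  rw [matPow_eq_cfc (isHermitian_ofReal_smul hA.1 c), matPow_eq_cfc hA.1, Complex.coe_smul,
    Complex.coe_smul, ← cfc_const_mul _ _ _ (A.finite_real_spectrum.continuousOn _),
    ← cfc_comp_smul c _ _ ((A.finite_real_spectrum.image _).continuousOn _) hA.1.isSelfAdjoint]
  refine cfc_congr fun x hx => ?_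
  exact Real.mul_rpow hc (spectrum_nonneg_of_nonneg hA.nonneg hx)

lemma isHermitian_matPow (A : Matrix n n ℂ) (r : ℝ) : (matPow A r).IsHermitian := by
  by_cases hA : A.IsHermitian
  · rw [matPow_eq_cfc hA]
    exact cfc_predicate _ A
  · rw [matPow, dif_neg hA]
    exact Matrix.isHermitian_zero

lemma isHermitian_matPow_mul_mul_matPow {ω : Matrix n n ℂ} (hω : ω.IsHermitian)
    (τ : Matrix n n ℂ) (r : ℝ) : (matPow τ r * ω * matPow τ r).IsHermitian := by
  simpa only [(isHermitian_matPow τ r).eq] using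
    Matrix.isHermitian_conjTranspose_mul_mul (matPow τ r) hω

lemma posSemidef_matPow_mul_mul_matPow {ω : Matrix n n ℂ} (hω : ω.PosSemidef)
    (τ : Matrix n n ℂ) (r : ℝ) : (matPow τ r * ω * matPow τ r).PosSemidef := by
  simpa only [(isHermitian_matPow τ r).eq] using hω.conjTranspose_mul_mul_same (matPow τ r)

lemma cfc_eq_aeval_of_eqOn {f : ℝ → ℝ} {A : Matrix n n ℂ} (hA : A.IsHermitian)
    {g : Polynomial ℝ} (hfg : (spectrum ℝ A).EqOn f g.eval) : cfc f A = Polynomial.aeval A g :=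
  (cfc_congr hfg).trans (cfc_polynomial g A hA.isSelfAdjoint)

end MatPow

section BlockDiag

variable {X B : Type} [Fintype X] [DecidableEq X] [Fintype B] [DecidableEq B]

-- Mathlib's `Matrix.blockDiagonal` with the block index moved to the front, as in `cqOp`.
def blockDiag : (X → Matrix B B ℂ) →ₐ[ℂ] Matrix (X × B) (X × B) ℂ :=
  (Matrix.reindexAlgEquiv ℂ ℂ (Equiv.prodComm B X)).toAlgHom.comp
    { Matrix.blockDiagonalRingHom B X ℂ with
      commutes' := fun c => by
        simp [Matrix.algebraMap_eq_diagonal, Pi.algebraMap_def] }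

lemma blockDiag_apply (M : X → Matrix B B ℂ) (a b : X × B) :
    blockDiag M a b = if a.1 = b.1 then M a.1 a.2 b.2 else 0 := by
  change Matrix.blockDiagonal M (a.2, a.1) (b.2, b.1) = _
  exact Matrix.blockDiagonal_apply' M _ _ _ _

lemma cqOp_eq_blockDiag (p : X → ℝ) (K : X → Matrix B B ℂ) :
    cqOp p K = blockDiag fun x => (p x : ℂ) • K x := by
  ext a b
  rw [blockDiag_apply, cqOp, Matrix.of_apply]
  split_ifs with h <;> simp [h]

lemma conjTranspose_blockDiag (M : X → Matrix B B ℂ) :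
    (blockDiag M)ᴴ = blockDiag fun x => (M x)ᴴ := by
  ext a b
  simp only [Matrix.conjTranspose_apply, blockDiag_apply]
  split_ifs with h h' h' <;> simp_all

lemma isHermitian_blockDiag {M : X → Matrix B B ℂ} (hM : ∀ x, (M x).IsHermitian) :
    (blockDiag M).IsHermitian := by
  rw [Matrix.IsHermitian, conjTranspose_blockDiag]
  exact congrArg blockDiag (funext hM)

lemma trace_blockDiag (M : X → Matrix B B ℂ) :
    (blockDiag M).trace = ∑ x, (M x).trace := by
  simp [Matrix.trace, blockDiag_apply, Fintype.sum_prod_type]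

lemma blockDiag_mulVec_single (M : X → Matrix B B ℂ) (x : X) (v : B → ℂ) :
    blockDiag M *ᵥ Function.uncurry (Pi.single x v) =
      Function.uncurry (Pi.single x (M x *ᵥ v)) := by
  ext ⟨y, i⟩
  simp only [Matrix.mulVec, dotProduct, blockDiag_apply, Fintype.sum_prod_type,
    Function.uncurry_apply_pair]
  rcases eq_or_ne y x with rfl | hyx
  · simp [Pi.single_apply, Matrix.mulVec, dotProduct]
  · simp [Pi.single_apply, hyx]

lemma SuppSubset.of_blockDiag {M N : X → Matrix B B ℂ}
    (h : SuppSubset (blockDiag M) (blockDiag N)) (x : X) : SuppSubset (M x) (N x) := by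
  intro v hv
  have := h _ (by rw [blockDiag_mulVec_single, hv, Pi.single_zero]; rfl)
  rw [blockDiag_mulVec_single] at this
  funext i
  simpa using congrFun (congrFun (congrArg Function.curry this) x) i

-- One interpolating polynomial agrees with `f` on the spectra of `blockDiag M` and of all `M x`.
lemma cfc_blockDiag (f : ℝ → ℝ) {M : X → Matrix B B ℂ} (hM : ∀ x, (M x).IsHermitian) :
    cfc f (blockDiag M) = blockDiag fun x => cfc f (M x) := by
  let s : Finset ℝ := (blockDiag M).finite_real_spectrum.toFinset ∪
    Finset.univ.biUnion fun x => (M x).finite_real_spectrum.toFinset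
  let g : Polynomial ℝ := Lagrange.interpolate s id f
  have hg {t : ℝ} (ht : t ∈ s) : f t = g.eval t :=
    (Lagrange.eval_interpolate_at_node f (Set.injOn_id _) ht).symm
  rw [cfc_eq_aeval_of_eqOn (isHermitian_blockDiag hM) fun t ht => hg (by simp [s, ht])]
  have hblock (x : X) : cfc f (M x) = Polynomial.aeval (M x) g :=
    cfc_eq_aeval_of_eqOn (hM x) fun t ht => hg (by simp [s]; exact Or.inr ⟨x, ht⟩)
  simp_rw [hblock]
  rw [show blockDiag M = blockDiag.restrictScalars ℝ M from rfl, Polynomial.aeval_algHom_apply]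
  exact congrArg blockDiag
    (funext fun x => (Polynomial.aeval_algHom_apply (Pi.evalAlgHom ℝ _ x) M g).symm)

lemma matPow_blockDiag {M : X → Matrix B B ℂ} (hM : ∀ x, (M x).IsHermitian) (r : ℝ) :
    matPow (blockDiag M) r = blockDiag fun x => matPow (M x) r := by
  simp only [matPow_eq_cfc (isHermitian_blockDiag hM), cfc_blockDiag _ hM, matPow_eq_cfc (hM _)]

end BlockDiag

section GeomRenyiTrace

variable {n : Type} [Fintype n] [DecidableEq n]

-- `Q̂_α(ω‖τ)`, the argument of the logarithm in `geomRenyi`.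
noncomputable def geomRenyiTrace (α : ℝ) (ω τ : Matrix n n ℂ) : ℝ :=
  ((τ * matPow (matPow τ (-2⁻¹) * ω * matPow τ (-2⁻¹)) α).trace).re

lemma geomRenyi_of_suppSubset {α : ℝ} (hα : 1 < α) {ω τ : Matrix n n ℂ} (h : SuppSubset ω τ) :
    geomRenyi α ω τ = (((α - 1)⁻¹ : ℝ) : EReal) * elog2 (geomRenyiTrace α ω τ) :=
  if_pos (Or.inr ⟨hα, h⟩)

lemma geomRenyi_of_pos {α : ℝ} (hα : 1 < α) {ω τ : Matrix n n ℂ} (h : SuppSubset ω τ)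
    (hQ : 0 < geomRenyiTrace α ω τ) :
    geomRenyi α ω τ = (((α - 1)⁻¹ * Real.logb 2 (geomRenyiTrace α ω τ) : ℝ) : EReal) := by
  rw [geomRenyi_of_suppSubset hα h, elog2_of_pos hQ, EReal.coe_mul]

lemma geomRenyi_eq_bot {α : ℝ} (hα : 1 < α) {ω τ : Matrix n n ℂ} (h : SuppSubset ω τ)
    (hQ : geomRenyiTrace α ω τ ≤ 0) : geomRenyi α ω τ = ⊥ := by
  rw [geomRenyi_of_suppSubset hα h, elog2_of_nonpos hQ,
    EReal.coe_mul_bot_of_pos (inv_pos.2 (sub_pos.2 hα))]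

lemma geomRenyi_of_not_suppSubset {α : ℝ} (hα : 1 < α) {ω τ : Matrix n n ℂ}
    (h : ¬SuppSubset ω τ) : geomRenyi α ω τ = ⊤ :=
  if_neg fun h' => h'.elim (fun h1 => by linarith [h1.2]) fun h2 => h h2.2

lemma geomRenyiTrace_smul {α : ℝ} (hα : α ≠ 1) {ω τ : Matrix n n ℂ} (hω : ω.PosSemidef)
    (hτ : τ.PosSemidef) {c d : ℝ} (hc : 0 ≤ c) (hd : 0 ≤ d) :
    geomRenyiTrace α ((c : ℂ) • ω) ((d : ℂ) • τ) = c ^ α * d ^ (1 - α) * geomRenyiTrace α ω τ := by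
  have hcd : 0 ≤ d ^ (-2⁻¹ : ℝ) * c * d ^ (-2⁻¹ : ℝ) := by positivity
  have hsandwich : matPow ((d : ℂ) • τ) (-2⁻¹) * ((c : ℂ) • ω) * matPow ((d : ℂ) • τ) (-2⁻¹) =
      ((d ^ (-2⁻¹ : ℝ) * c * d ^ (-2⁻¹ : ℝ) : ℝ) : ℂ) •
        (matPow τ (-2⁻¹) * ω * matPow τ (-2⁻¹)) := by
    simp only [matPow_smul hτ hd, Matrix.smul_mul, Matrix.mul_smul, smul_smul, Complex.ofReal_mul]
    ring_nf
  rw [geomRenyiTrace, geomRenyiTrace, hsandwich,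
    matPow_smul (posSemidef_matPow_mul_mul_matPow hω τ _) hcd, Matrix.smul_mul, Matrix.mul_smul,
    smul_smul, Matrix.trace_smul, smul_eq_mul, ← Complex.ofReal_mul, Complex.re_ofReal_mul,
    rpow_mul_rpow_neg_half hα hc hd]

end GeomRenyiTrace

section DirectSum

variable {X B : Type} [Fintype X] [DecidableEq X] [Fintype B] [DecidableEq B]

lemma geomRenyiTrace_blockDiag (α : ℝ) {M N : X → Matrix B B ℂ} (hM : ∀ x, (M x).IsHermitian)
    (hN : ∀ x, (N x).IsHermitian) :
    geomRenyiTrace α (blockDiag M) (blockDiag N) = ∑ x, geomRenyiTrace α (M x) (N x) := by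
  have hsandwich : matPow (blockDiag N) (-2⁻¹) * blockDiag M * matPow (blockDiag N) (-2⁻¹) =
      blockDiag fun x => matPow (N x) (-2⁻¹) * M x * matPow (N x) (-2⁻¹) := by
    rw [matPow_blockDiag hN, ← map_mul, ← map_mul]
    rfl
  rw [geomRenyiTrace, hsandwich,
    matPow_blockDiag fun x => isHermitian_matPow_mul_mul_matPow (hM x) _ _, ← map_mul,
    trace_blockDiag, Complex.re_sum]
  rfl

lemma geomRenyiTrace_cqOp {α : ℝ} (hα : α ≠ 1) {p q : X → ℝ} {κ lam : X → Matrix B B ℂ}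
    (hp : ∀ x, 0 ≤ p x) (hq : ∀ x, 0 ≤ q x) (hκ : ∀ x, (κ x).PosSemidef)
    (hlam : ∀ x, (lam x).PosSemidef) :
    geomRenyiTrace α (cqOp p κ) (cqOp q lam) =
      ∑ x, p x ^ α * q x ^ (1 - α) * geomRenyiTrace α (κ x) (lam x) := by
  rw [cqOp_eq_blockDiag, cqOp_eq_blockDiag,
    geomRenyiTrace_blockDiag α (fun x => isHermitian_ofReal_smul (hκ x).1 (p x))
    fun x => isHermitian_ofReal_smul (hlam x).1 (q x)]
  exact Finset.sum_congr rfl fun x _ => geomRenyiTrace_smul hα (hκ x) (hlam x) (hp x) (hq x)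

lemma SuppSubset.block_of_cqOp {p q : X → ℝ} {κ lam : X → Matrix B B ℂ}
    (h : SuppSubset (cqOp p κ) (cqOp q lam)) {x : X} (hpx : p x ≠ 0) (hκx : (κ x).trace ≠ 0) :
    q x ≠ 0 ∧ SuppSubset (κ x) (lam x) := by
  rw [cqOp_eq_blockDiag, cqOp_eq_blockDiag] at h
  have hker (v : B → ℂ) (hv : ((q x : ℂ) • lam x) *ᵥ v = 0) : κ x *ᵥ v = 0 := by
    have := h.of_blockDiag x v hv
    rw [Matrix.smul_mulVec] at this
    exact (smul_eq_zero.1 this).resolve_left (Complex.ofReal_ne_zero.2 hpx)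
  refine ⟨fun hqx => hκx ?_, fun v hv => hker v (by rw [Matrix.smul_mulVec, hv, smul_zero])⟩
  have : κ x = 0 := Matrix.ext_of_mulVec_single fun i =>
    (hker _ (by rw [hqx, Complex.ofReal_zero, zero_smul, Matrix.zero_mulVec])).trans
      (Matrix.zero_mulVec _).symm
  rw [this, Matrix.trace_zero]

end DirectSum

/-- Direct-sum inequality for the geometric Rényi relative entropy:
for every `α > 1` and classical–quantum `κ`, `λ`,
`D̂_α(κ‖λ) ≥ D(p‖q) + ∑ x p(x) D̂_α(κ_x‖λ_x)`. -/
theorem geomRenyi_directSum {X A : Type} [Fintype X] [DecidableEq X] [Fintype A] [DecidableEq A]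
    (α : ℝ) (hα : 1 < α)
    (p q : X → ℝ) (κ lam : X → Matrix A A ℂ)
    (hp : IsProb p) (hκ : ∀ x, IsState (κ x))
    (hq : ∀ x, 0 ≤ q x) (hlam : ∀ x, (lam x).PosSemidef) :
    geomRenyi α (cqOp p κ) (cqOp q lam) ≥
      cRelEnt p q + ∑ x, (p x : EReal) * geomRenyi α (κ x) (lam x) := by
  by_cases hsupp : SuppSubset (cqOp p κ) (cqOp q lam)
  swap
  · rw [geomRenyi_of_not_suppSubset hα hsupp]
    exact le_top
  have hblock {x : X} (hx : p x ≠ 0) : q x ≠ 0 ∧ SuppSubset (κ x) (lam x) :=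
    hsupp.block_of_cqOp hx ((hκ x).2 ▸ one_ne_zero)
  have hq_pos (x : X) (hx : p x ≠ 0) : 0 < q x := (hq x).lt_of_ne' (hblock hx).1
  set T : X → ℝ := fun x => geomRenyiTrace α (κ x) (lam x)
  by_cases hT : ∀ x, p x ≠ 0 → 0 < T x
  swap
  · push Not at hT
    obtain ⟨x, hx, hTx⟩ := hT
    rw [← Finset.add_sum_erase _ _ (Finset.mem_univ x), geomRenyi_eq_bot hα (hblock hx).2 hTx,
      EReal.coe_mul_bot_of_pos ((hp.1 x).lt_of_ne' hx), EReal.bot_add, EReal.add_bot]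
    exact bot_le
  have hterm (x : X) : (p x : EReal) * geomRenyi α (κ x) (lam x) =
      ((p x * ((α - 1)⁻¹ * Real.logb 2 (T x)) : ℝ) : EReal) := by
    rcases eq_or_ne (p x) 0 with hx | hx
    · simp [hx]
    rw [geomRenyi_of_pos hα (hblock hx).2 (hT x hx)]
    norm_cast
  have hQ := geomRenyiTrace_cqOp (by linarith) hp.1 hq (fun x => (hκ x).1) hlam
  rw [geomRenyi_of_pos hα hsupp (hQ ▸ sum_rpow_mul_rpow_one_sub_mul_pos (by linarith) hp hq_pos hT),
    hQ, cRelEnt, if_pos fun x hx => (hblock hx).1, Finset.sum_congr rfl fun x _ => hterm x]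
  exact_mod_cast sum_mul_logb_div_add_le_logb_sum_rpow hα hp hq_pos hT

end RainsPaper
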